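/- For every left canonical Gauss code w on n letters, rev^LC(w) is left canonical and rev^LC(rev^LC(w)) = w; that is, rev^LC is an involution of the set of left canonical Gauss codes on n letters. -/

import Mathlib

/-- A Gauss code on `n` letters: a bijection from the `2*n` positions to
letters paired with a side (`false` = L, `true` = R). -/
abbrev GaussCode (n : ℕ) := Fin (2 * n) ≃ Fin n × Bool

instance (n : ℕ) [NeZero n] : NeZero (2 * n) := ⟨by have := NeZero.ne n; omega⟩

namespace GaussCode

variable {n : ℕ}

/-- `π_*(w)`: relabel the letters by the permutation `π`. -/
def permAct (π : Equiv.Perm (Fin n)) (w : GaussCode n) : GaussCode n :=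
  w.trans (π.prodCongr (Equiv.refl Bool))

open Fin.NatCast in
/-- `shift[m](w)`: the code whose entry at position `i` is the entry of `w` at
position `i + m` (mod `2n`). -/
def shift [NeZero n] (m : ℕ) (w : GaussCode n) : GaussCode n :=
  (Equiv.addRight ((m : Fin (2 * n)))).trans w

/-- `rev(w)`: the code whose entry at position `i` is the entry of `w` at
position `2n - 1 - i`. -/
def rev (w : GaussCode n) : GaussCode n :=
  (Fin.revPerm).trans w

/-- A Gauss code is left preferred if its `L`-entries appear in the order
`(1,L), (2,L), …, (n,L)` and its entry at position `0` is `(1,L)`. -/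
def IsLeftPreferred [NeZero n] (w : GaussCode n) : Prop :=
  StrictMono (fun j : Fin n => w.symm (j, false)) ∧ w 0 = (0, false)

/-- `proj^LP(w)`: relabel letters in the order of appearance of their `L`-entries,
then rotate so that `(1,L)` is at position `0`. -/
def projLP [NeZero n] (w : GaussCode n) : GaussCode n :=
  let π : Equiv.Perm (Fin n) := (Tuple.sort (fun j : Fin n => w.symm (j, false)))⁻¹
  let w' := permAct π w
  shift ((w'.symm ((0 : Fin n), false)).val) w'

/-- `shift^LP(w) := proj^LP(shift[1](w))`. -/
def shiftLP [NeZero n] (w : GaussCode n) : GaussCode n :=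
  projLP (shift 1 w)

/-- `rev^LP(w) := proj^LP(rev(w))`. -/
def revLP [NeZero n] (w : GaussCode n) : GaussCode n :=
  projLP (rev w)

/-- The value of an entry in the order `(1,L) < (1,R) < (2,L) < (2,R) < …`. -/
def entryKey (e : Fin n × Bool) : ℕ :=
  2 * e.1.val + (if e.2 then 1 else 0)

/-- Lexicographic (strict) order on Gauss codes, comparing entries position by
position in the order `(1,L) < (1,R) < (2,L) < (2,R) < …`. -/
def lexLt (w w' : GaussCode n) : Prop :=
  ∃ i : Fin (2 * n), (∀ k, k < i → w k = w' k) ∧ entryKey (w i) < entryKey (w' i)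

/-- Lexicographic order on Gauss codes. -/
def lexLe (w w' : GaussCode n) : Prop :=
  w = w' ∨ lexLt w w'

/-- A left preferred Gauss code is left canonical if it is the smallest element
of its `shift^LP`-orbit `{w, shift^LP(w), …, (shift^LP)^{n-1}(w)}`. -/
def IsLeftCanonical [NeZero n] (w : GaussCode n) : Prop :=
  IsLeftPreferred w ∧ ∀ k < n, lexLe w (shiftLP^[k] w)

/-- `proj^LC(w)`: the smallest element of the `shift^LP`-orbit of `proj^LP(w)`. -/
noncomputable def projLC [NeZero n] (w : GaussCode n) : GaussCode n :=
  letI := Classical.propDecidable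
  if h : ∃ v : GaussCode n, (∃ k < n, v = shiftLP^[k] (projLP w)) ∧
      ∀ k < n, lexLe v (shiftLP^[k] (projLP w))
  then h.choose else projLP w

/-- `rev^LC(w) := proj^LC(rev(w))`. -/
noncomputable def revLC [NeZero n] (w : GaussCode n) : GaussCode n :=
  projLC (rev w)

/-- Oriented equivalence of Gauss codes: `w' = shift[m](π_*(w))` for some
permutation `π` and integer `m`. -/
def OrientedEquiv [NeZero n] (w w' : GaussCode n) : Prop :=
  ∃ (π : Equiv.Perm (Fin n)) (m : ℕ), w' = shift m (permAct π w)

/-- Unoriented equivalence: `w` is orientedly equivalent to `w'` or to `rev(w')`. -/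
def UnorientedEquiv [NeZero n] (w w' : GaussCode n) : Prop :=
  OrientedEquiv w w' ∨ OrientedEquiv w (rev w')

/-- A Gauss code is 1-reducible if two cyclically adjacent entries share the same letter. -/
def OneReducible [NeZero n] (w : GaussCode n) : Prop :=
  ∃ i : Fin (2 * n), (w i).1 = (w (i + 1)).1

/-- A Gauss code is 2-reducible (cyclically, with `L = false`, `R = true`). -/
def TwoReducible [NeZero n] (w : GaussCode n) : Prop :=
  ∃ (i i' : Fin (2 * n)) (j k : Fin n), j ≠ k ∧
    ((w i = (j, false) ∧ w (i + 1) = (k, true) ∧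
        w i' = (j, true) ∧ w (i' + 1) = (k, false)) ∨
     (w i = (j, false) ∧ w (i + 1) = (k, true) ∧
        w i' = (k, false) ∧ w (i' + 1) = (j, true)) ∨
     (w i = (j, true) ∧ w (i + 1) = (k, false) ∧
        w i' = (k, true) ∧ w (i' + 1) = (j, false)))

/-- A Gauss code is minimal if it is neither 1-reducible nor 2-reducible. -/
def IsMinimal [NeZero n] (w : GaussCode n) : Prop :=
  ¬ OneReducible w ∧ ¬ TwoReducible w

/-- `σ_w`: the involution of positions sending each position to the unique other
position carrying the same letter. -/
def sigmaMap (w : GaussCode n) : Fin (2 * n) → Fin (2 * n) :=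
  fun i => w.symm ((w i).1, !(w i).2)

/-- `h_w`: the side (`false` = L, `true` = R) of the entry at each position. -/
def hMap (w : GaussCode n) : Fin (2 * n) → Bool :=
  fun i => (w i).2

end GaussCode

/-!
Rotating a code past an `R`-entry does not change `proj^LP`, and rotating it past an `L`-entry
applies `shift^LP` once. So `proj^LP(shift[p](v))` is `proj^LP(v)` moved by `shift^LP` as many
times as there are `L`-entries before position `p`; since a code has exactly `n` of them, a full
turn shows that the orbit has period `n`, and the `shift^LP`-orbit of `proj^LP(v)` is the set of
all `proj^LP(shift[p](v))`. That set, and with it its lexicographic minimum `proj^LC(v)`, depends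
only on the oriented equivalence class of `v`. Reversal respects oriented equivalence, so
`rev^LC(rev^LC(w))` is `proj^LC` of a code orientedly equivalent to `w`, which is `w` itself when
`w` is left canonical.
-/

theorem Fin.strictMonoOn_sub_right {m : ℕ} (c : Fin m) : StrictMonoOn (· - c) (Set.Ici c) :=
  fun a ha b hb hab => by
    rw [Fin.lt_def, Fin.sub_val_of_le ha, Fin.sub_val_of_le hb]
    have : c.val ≤ a.val := ha
    have : a.val < b.val := hab
    omega

theorem Tuple.sort_eq_of_monotone_comp {m : ℕ} {α : Type*} [LinearOrder α] {f : Fin m → α}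
    (hf : Function.Injective f) {σ : Equiv.Perm (Fin m)} (h : Monotone (f ∘ σ)) :
    Tuple.sort f = σ :=
  (Tuple.eq_sort_iff.2 ⟨h, fun _ _ hij hfij => absurd (σ.injective (hf hfij)) hij.ne⟩).symm

namespace GaussCode

open Function Finset Fin.NatCast

variable {n : ℕ}

theorem entryKey_injective : Injective (entryKey (n := n)) := by
  rintro ⟨a, _ | _⟩ ⟨b, _ | _⟩ h <;> simp [entryKey, Fin.ext_iff] at h ⊢ <;> omega

/-- `lexLt` is the lexicographic order of `Pi.Lex` on the sequences of entry keys. -/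
def lexKey (w : GaussCode n) : Lex (Fin (2 * n) → ℕ) :=
  toLex fun i => entryKey (w i)

theorem lexKey_injective : Injective (lexKey (n := n)) := fun _ _ h =>
  Equiv.ext fun i => entryKey_injective (congrFun (toLex.injective h) i)

theorem lexLe_iff_lexKey_le {w w' : GaussCode n} : lexLe w w' ↔ lexKey w ≤ lexKey w' := by
  rw [lexLe, le_iff_eq_or_lt, lexKey_injective.eq_iff]
  refine or_congr Iff.rfl ⟨?_, ?_⟩
  · rintro ⟨i, hpre, hi⟩
    exact ⟨i, fun j hj => congrArg entryKey (hpre j hj), hi⟩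
  · rintro ⟨i, hpre, hi⟩
    exact ⟨i, fun j hj => entryKey_injective (hpre j hj), hi⟩

theorem lexLe_antisymm {w w' : GaussCode n} (h : lexLe w w') (h' : lexLe w' w) : w = w' :=
  lexKey_injective (le_antisymm (lexLe_iff_lexKey_le.1 h) (lexLe_iff_lexKey_le.1 h'))

def lPos (w : GaussCode n) (j : Fin n) : Fin (2 * n) :=
  w.symm (j, false)

theorem lPos_injective (w : GaussCode n) : Injective (lPos w) := fun _ _ h =>
  congrArg Prod.fst (w.symm.injective h)

theorem lPos_eq_iff {w : GaussCode n} {j : Fin n} {i : Fin (2 * n)} :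
    lPos w j = i ↔ w i = (j, false) :=
  w.symm_apply_eq.trans eq_comm

theorem lPos_permAct (π : Equiv.Perm (Fin n)) (w : GaussCode n) :
    lPos (permAct π w) = lPos w ∘ π.symm :=
  rfl

theorem permAct_permAct (π ρ : Equiv.Perm (Fin n)) (w : GaussCode n) :
    permAct π (permAct ρ w) = permAct (ρ.trans π) w :=
  rfl

theorem rev_rev (w : GaussCode n) : rev (rev w) = w :=
  Equiv.ext fun i => congrArg w i.rev_rev

theorem rev_permAct (π : Equiv.Perm (Fin n)) (w : GaussCode n) :
    rev (permAct π w) = permAct π (rev w) :=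
  rfl

def relabel (w : GaussCode n) : GaussCode n :=
  permAct (Tuple.sort (lPos w))⁻¹ w

theorem lPos_relabel (w : GaussCode n) : lPos (relabel w) = lPos w ∘ Tuple.sort (lPos w) :=
  rfl

theorem strictMono_lPos_relabel (w : GaussCode n) : StrictMono (lPos (relabel w)) :=
  (Tuple.monotone_sort _).strictMono_of_injective ((lPos_injective w).comp (Equiv.injective _))

theorem relabel_permAct (π : Equiv.Perm (Fin n)) (w : GaussCode n) :
    relabel (permAct π w) = relabel w := by
  have hsort : Tuple.sort (lPos (permAct π w)) = (Tuple.sort (lPos w)).trans π := by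
    apply Tuple.sort_eq_of_monotone_comp (lPos_injective _)
    simpa [lPos_permAct, comp_def] using Tuple.monotone_sort (lPos w)
  rw [relabel, relabel, hsort, permAct_permAct]
  congr 1
  ext j
  simp [Equiv.Perm.inv_def]

variable [NeZero n]

theorem lPos_relabel_zero_le (w : GaussCode n) (j : Fin n) : lPos (relabel w) 0 ≤ lPos w j := by
  simpa [lPos_relabel] using
    (strictMono_lPos_relabel w).monotone (Fin.zero_le ((Tuple.sort (lPos w)).symm j))

theorem shift_apply (m : ℕ) (w : GaussCode n) (i : Fin (2 * n)) :
    shift m w i = w (i + m) :=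
  rfl

theorem shift_add (a b : ℕ) (w : GaussCode n) : shift a (shift b w) = shift (a + b) w :=
  Equiv.ext fun i => by simp only [shift_apply, Nat.cast_add, add_assoc]

theorem shift_zero (w : GaussCode n) : shift 0 w = w :=
  Equiv.ext fun i => by simp only [shift_apply, Nat.cast_zero, add_zero]

theorem shift_add_two_mul (p q : ℕ) (w : GaussCode n) : shift (p + 2 * n * q) w = shift p w := by
  have h : ((2 * n * q : ℕ) : Fin (2 * n)) = 0 := Fin.natCast_eq_zero.2 (dvd_mul_right _ _)
  exact Equiv.ext fun i => by simp only [shift_apply, Nat.cast_add, h, add_zero]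

theorem shift_permAct (m : ℕ) (π : Equiv.Perm (Fin n)) (w : GaussCode n) :
    shift m (permAct π w) = permAct π (shift m w) :=
  rfl

theorem lPos_shift (m : ℕ) (w : GaussCode n) (j : Fin n) : lPos (shift m w) j = lPos w j - m := by
  simp [lPos, shift, sub_eq_add_neg]

theorem rev_shift (m : ℕ) (w : GaussCode n) :
    rev (shift m w) = shift ((2 * n - 1) * m) (rev w) := by
  have h : ((m : ℕ) : Fin (2 * n)) + (((2 * n - 1) * m : ℕ) : Fin (2 * n)) = 0 := by
    rw [← Nat.cast_add, Fin.natCast_eq_zero]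
    have : 1 ≤ 2 * n := Nat.one_le_iff_ne_zero.2 (NeZero.ne _)
    exact ⟨m, by rw [← one_add_mul, Nat.add_sub_cancel' this]⟩
  refine Equiv.ext fun i => congrArg w ?_
  show i.rev + m = (i + (((2 * n - 1) * m : ℕ) : Fin (2 * n))).rev
  rw [Fin.rev_add, eq_sub_iff_add_eq, add_assoc, h, add_zero]

theorem projLP_eq (w : GaussCode n) : projLP w = shift (lPos (relabel w) 0) (relabel w) :=
  rfl

theorem projLP_permAct (π : Equiv.Perm (Fin n)) (w : GaussCode n) :
    projLP (permAct π w) = projLP w := by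
  rw [projLP_eq, projLP_eq, relabel_permAct]

theorem isLeftPreferred_projLP (w : GaussCode n) : IsLeftPreferred (projLP w) := by
  set s := lPos (relabel w) 0
  have hs : (((s : ℕ) : Fin (2 * n))) = s := Fin.cast_val_eq_self s
  have hmono := strictMono_lPos_relabel w
  constructor
  · show StrictMono (lPos (projLP w))
    intro a b hab
    rw [projLP_eq, lPos_shift, lPos_shift, hs]
    exact Fin.strictMonoOn_sub_right s (hmono.monotone (Fin.zero_le a))
      (hmono.monotone (Fin.zero_le b)) (hmono hab)
  · rw [projLP_eq, shift_apply, zero_add, hs]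
    exact lPos_eq_iff.1 rfl

theorem projLP_of_isLeftPreferred {w : GaussCode n} (hw : IsLeftPreferred w) : projLP w = w := by
  have hrelabel : relabel w = w := by
    have hmono : Monotone (lPos w) := hw.1.monotone
    rw [relabel, Tuple.sort_eq_refl_iff_monotone.2 hmono]
    rfl
  have hzero : lPos w 0 = 0 := lPos_eq_iff.2 hw.2
  rw [projLP_eq, hrelabel, hzero, Fin.val_zero, shift_zero]

theorem shiftLP_projLP (w : GaussCode n) :
    shiftLP (projLP w) = projLP (shift (1 + lPos (relabel w) 0) w) := by
  rw [shiftLP, projLP_eq w, shift_add, relabel, shift_permAct, projLP_permAct]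

theorem projLP_shift_one_of_L {w : GaussCode n} (h : (w 0).2 = false) :
    projLP (shift 1 w) = shiftLP (projLP w) := by
  have hzero : lPos (relabel w) 0 = 0 :=
    nonpos_iff_eq_zero.1 (lPos_eq_iff.2 (Prod.ext rfl h) ▸ lPos_relabel_zero_le w (w 0).1)
  rw [shiftLP_projLP, hzero, Fin.val_zero]

theorem projLP_shift_one_of_R {w : GaussCode n} (h : (w 0).2 = true) :
    projLP (shift 1 w) = projLP w := by
  have hpos : ∀ j, 1 ≤ lPos w j := fun j => Fin.one_le_of_ne_zero fun h0 => by
    simp [lPos_eq_iff.1 h0] at h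
  have hsort : Tuple.sort (lPos (shift 1 w)) = Tuple.sort (lPos w) := by
    apply Tuple.sort_eq_of_monotone_comp (lPos_injective _)
    intro a b hab
    simp only [comp_apply, lPos_shift, Nat.cast_one]
    exact (Fin.strictMonoOn_sub_right 1).monotoneOn (hpos _) (hpos _)
      (Tuple.monotone_sort (lPos w) hab)
  have hrelabel : relabel (shift 1 w) = shift 1 (relabel w) := by
    rw [relabel, relabel, hsort, shift_permAct]
  have hs : ((lPos (relabel (shift 1 w)) 0 : ℕ)) + 1 = lPos (relabel w) 0 := by
    have h1 : 1 ≤ lPos (relabel w) 0 := hpos _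
    rw [hrelabel, lPos_shift, Nat.cast_one, Fin.sub_val_of_le h1]
    have h1' : (1 : Fin (2 * n)).val ≤ (lPos (relabel w) 0).val := h1
    have hone : (1 : Fin (2 * n)).val = 1 := by
      rw [Fin.val_one']
      exact Nat.mod_eq_of_lt (by have := NeZero.ne n; omega)
    omega
  rw [projLP_eq (shift 1 w), hrelabel, shift_add, ← hrelabel, hs, projLP_eq]

/-- The position `i : ℕ` is read mod `2n`. -/
def lCount (w : GaussCode n) (p : ℕ) : ℕ :=
  #((range p).filter fun i : ℕ => (w i).2 = false)

theorem projLP_shift_eq_iterate (w : GaussCode n) (p : ℕ) :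
    projLP (shift p w) = shiftLP^[lCount w p] (projLP w) := by
  induction p with
  | zero => simp [lCount, shift_zero]
  | succ p ih =>
    have hstep : shift (p + 1) w = shift 1 (shift p w) := by rw [shift_add, add_comm]
    have hentry : (shift p w 0) = w p := by rw [shift_apply, zero_add]
    rw [lCount, range_add_one, filter_insert, hstep]
    cases hside : (w p).2
    · rw [if_pos rfl, card_insert_of_notMem (by simp), iterate_succ_apply', ← lCount, ← ih,
        projLP_shift_one_of_L (by rw [hentry, hside])]
    · rw [if_neg (by simp), ← lCount, ← ih, projLP_shift_one_of_R (by rw [hentry, hside])]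

theorem lCount_two_mul (w : GaussCode n) : lCount w (2 * n) = n := by
  rw [lCount, card_filter,
    ← Fin.sum_univ_eq_sum_range (fun i => if (w i).2 = false then 1 else 0)]
  simp only [Fin.cast_val_eq_self]
  rw [w.sum_comp (fun x => if x.2 = false then 1 else 0), Fintype.sum_prod_type]
  simp

theorem isPeriodicPt_shiftLP_projLP (w : GaussCode n) : IsPeriodicPt shiftLP n (projLP w) := by
  have h := projLP_shift_eq_iterate w (2 * n)
  rwa [lCount_two_mul, ← zero_add (2 * n), ← mul_one (2 * n), shift_add_two_mul, shift_zero,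
    eq_comm] at h

/-- By `mem_lpOrbit_iff`, this is the `shift^LP`-orbit of `proj^LP(w)`. -/
def lpOrbit (w : GaussCode n) : Set (GaussCode n) :=
  Set.range fun p : ℕ => projLP (shift p w)

theorem projLP_mem_lpOrbit (w : GaussCode n) : projLP w ∈ lpOrbit w :=
  ⟨0, by dsimp only; rw [shift_zero]⟩

theorem mapsTo_shiftLP_lpOrbit (w : GaussCode n) : Set.MapsTo shiftLP (lpOrbit w) (lpOrbit w) := by
  rintro _ ⟨p, rfl⟩
  exact ⟨_, by dsimp only; rw [shiftLP_projLP, shift_add]⟩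

theorem mem_lpOrbit_iff {w u : GaussCode n} :
    u ∈ lpOrbit w ↔ ∃ k < n, u = shiftLP^[k] (projLP w) := by
  constructor
  · rintro ⟨p, rfl⟩
    refine ⟨lCount w p % n, Nat.mod_lt _ (Nat.pos_of_neZero n), ?_⟩
    dsimp only
    rw [(isPeriodicPt_shiftLP_projLP w).iterate_mod_apply, projLP_shift_eq_iterate]
  · rintro ⟨k, -, rfl⟩
    exact (mapsTo_shiftLP_lpOrbit w).iterate k (projLP_mem_lpOrbit w)

theorem lpOrbit_permAct (π : Equiv.Perm (Fin n)) (w : GaussCode n) :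
    lpOrbit (permAct π w) = lpOrbit w := by
  simp only [lpOrbit, shift_permAct, projLP_permAct]

theorem lpOrbit_shift (m : ℕ) (w : GaussCode n) : lpOrbit (shift m w) = lpOrbit w := by
  ext u
  simp only [lpOrbit, Set.mem_range]
  constructor
  · rintro ⟨p, rfl⟩
    exact ⟨p + m, by rw [shift_add]⟩
  · rintro ⟨p, rfl⟩
    refine ⟨p + (2 * n - 1) * m, ?_⟩
    have : p + (2 * n - 1) * m + m = p + 2 * n * m := by
      have : 1 ≤ 2 * n := Nat.one_le_iff_ne_zero.2 (NeZero.ne _)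
      rw [add_assoc, ← add_one_mul, Nat.sub_add_cancel this]
    simp only [shift_add, this, shift_add_two_mul]

theorem lpOrbit_eq_of_orientedEquiv {w w' : GaussCode n} (h : OrientedEquiv w w') :
    lpOrbit w' = lpOrbit w := by
  obtain ⟨π, m, rfl⟩ := h
  rw [lpOrbit_shift, lpOrbit_permAct]

theorem orientedEquiv_of_mem_lpOrbit {w u : GaussCode n} (hu : u ∈ lpOrbit w) :
    OrientedEquiv w u := by
  obtain ⟨p, rfl⟩ := hu
  refine ⟨(Tuple.sort (lPos (shift p w)))⁻¹, lPos (relabel (shift p w)) 0 + p, ?_⟩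
  dsimp only
  rw [projLP_eq, relabel, shift_permAct, shift_add, ← shift_permAct]

theorem OrientedEquiv.rev {w w' : GaussCode n} (h : OrientedEquiv w w') :
    OrientedEquiv (rev w) (rev w') := by
  obtain ⟨π, m, rfl⟩ := h
  exact ⟨π, _, by rw [rev_shift, rev_permAct]⟩

theorem projLC_spec (w : GaussCode n) :
    projLC w ∈ lpOrbit w ∧ ∀ u ∈ lpOrbit w, lexLe (projLC w) u := by
  have hfin : (lpOrbit w).Finite :=
    ((Set.finite_Iio n).image fun k => shiftLP^[k] (projLP w)).subset fun u hu => by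
      obtain ⟨k, hk, rfl⟩ := mem_lpOrbit_iff.1 hu
      exact ⟨k, hk, rfl⟩
  obtain ⟨v, hv, hmin⟩ :=
    Set.exists_min_image (lpOrbit w) lexKey hfin ⟨_, projLP_mem_lpOrbit w⟩
  have hspec : ∀ v, ((∃ k < n, v = shiftLP^[k] (projLP w)) ∧
      ∀ k < n, lexLe v (shiftLP^[k] (projLP w))) ↔
      v ∈ lpOrbit w ∧ ∀ u ∈ lpOrbit w, lexLe v u := by
    intro v
    simp only [mem_lpOrbit_iff]
    exact and_congr_right fun _ =>
      ⟨fun h u ⟨k, hk, hu⟩ => hu ▸ h k hk, fun h k hk => h _ ⟨k, hk, rfl⟩⟩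
  have hex := (hspec v).2 ⟨hv, fun u hu => lexLe_iff_lexKey_le.2 (hmin u hu)⟩
  rw [projLC, dif_pos ⟨v, hex⟩]
  generalize_proofs h
  exact (hspec _).1 h.choose_spec

theorem projLC_eq_of_isLeast {w u : GaussCode n} (hu : u ∈ lpOrbit w)
    (hmin : ∀ u' ∈ lpOrbit w, lexLe u u') : projLC w = u :=
  lexLe_antisymm ((projLC_spec w).2 u hu) (hmin _ (projLC_spec w).1)

theorem projLC_eq_of_orientedEquiv {w w' : GaussCode n} (h : OrientedEquiv w w') :
    projLC w' = projLC w := by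
  refine projLC_eq_of_isLeast ?_ ?_ <;> rw [lpOrbit_eq_of_orientedEquiv h]
  exacts [(projLC_spec w).1, (projLC_spec w).2]

theorem isLeftCanonical_projLC (w : GaussCode n) : IsLeftCanonical (projLC w) := by
  obtain ⟨hmem, hmin⟩ := projLC_spec w
  refine ⟨?_, fun k _ => hmin _ ((mapsTo_shiftLP_lpOrbit w).iterate k hmem)⟩
  obtain ⟨p, hp⟩ := hmem
  rw [← hp]
  exact isLeftPreferred_projLP _

theorem projLC_eq_self {w : GaussCode n} (hw : IsLeftCanonical w) : projLC w = w := by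
  have hproj := projLP_of_isLeftPreferred hw.1
  have hmem := projLP_mem_lpOrbit w
  rw [hproj] at hmem
  refine projLC_eq_of_isLeast hmem fun u hu => ?_
  obtain ⟨k, hk, rfl⟩ := mem_lpOrbit_iff.1 hu
  rw [hproj]
  exact hw.2 k hk

end GaussCode

open GaussCode in
/-- `rev^LC` is an involution of the set of left canonical Gauss codes. -/
theorem stmt12 (n : ℕ) [NeZero n] (w : GaussCode n) (hw : IsLeftCanonical w) :
    IsLeftCanonical (revLC w) ∧ revLC (revLC w) = w := by
  refine ⟨isLeftCanonical_projLC _, ?_⟩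
  have hequiv : OrientedEquiv w (rev (revLC w)) := by
    have h := (orientedEquiv_of_mem_lpOrbit (projLC_spec (rev w)).1).rev
    rwa [rev_rev] at h
  calc revLC (revLC w) = projLC w := projLC_eq_of_orientedEquiv hequiv
    _ = w := projLC_eq_self hw
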